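/- Let n be a composite number with k·φ(n) = n − 1 for an integer k ≥ 3. Then the abundancy index σ(n)/n exceeds 24/π². -/

import Mathlib

/-!
The relation `k φ(n) = n - 1` makes `n` coprime to `φ(n)`, so `n` is squarefree and odd.
For squarefree `n` we have `σ(n) φ(n) = ∏_{p ∣ n} (p² - 1) = n² ∏_{p ∣ n} (1 - p⁻²)`, hence
`σ(n)/n = ∏_{p ∣ n} (1 - p⁻²) · n/φ(n)`. Comparing with the Euler product of `ζ(2) = π²/6`,
and using that `n` is odd, the product is at least `(1 - 2⁻²)⁻¹ · 6/π² = 8/π²`, while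
`n/φ(n) > k ≥ 3`.
-/

open Finset ArithmeticFunction
open scoped ArithmeticFunction.sigma Nat

namespace Nat

theorem coprime_totient_of_totient_dvd_sub_one {n : ℕ} (hn : n ≠ 0) (h : φ n ∣ n - 1) :
    n.Coprime (φ n) :=
  Coprime.coprime_dvd_right h <| (coprime_self_sub_right (by omega)).mpr (coprime_one_right n)

theorem squarefree_of_coprime_totient {n : ℕ} (h : n.Coprime (φ n)) : Squarefree n := by
  refine squarefree_iff_prime_squarefree.mpr fun p hp hpp => hp.one_lt.ne' ?_
  have hdvd_totient : p ∣ φ n := by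
    have := totient_dvd_of_dvd (pow_two p ▸ hpp)
    rw [totient_prime_pow hp two_pos, show 2 - 1 = 1 from rfl, pow_one] at this
    exact (Dvd.intro _ rfl).trans this
  exact eq_one_of_dvd_coprimes h ((Dvd.intro _ rfl).trans hpp) hdvd_totient

theorem odd_of_coprime_totient {n : ℕ} (hn : 2 < n) (h : n.Coprime (φ n)) : Odd n := by
  refine odd_iff.mpr (two_dvd_ne_zero.mp fun h2 => ?_)
  exact absurd (eq_one_of_dvd_coprimes h h2 (totient_even hn).two_dvd) (by norm_num)

theorem sigma_one_eq_prod_primeFactors_add_one {n : ℕ} (hn : Squarefree n) :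
    σ 1 n = ∏ p ∈ n.primeFactors, (p + 1) := by
  rw [← isMultiplicative_sigma.prod_primeFactors hn]
  refine prod_congr rfl fun p hp => ?_
  rw [← pow_one p, sigma_one_apply_prime_pow (prime_of_mem_primeFactors hp)]
  simp [sum_range_succ, add_comm]

theorem totient_eq_prod_primeFactors_sub_one {n : ℕ} (hn : Squarefree n) :
    φ n = ∏ p ∈ n.primeFactors, (p - 1) := by
  have h := totient_mul_prod_primeFactors n
  rw [prod_primeFactors_of_squarefree hn, mul_comm] at h
  exact Nat.eq_of_mul_eq_mul_left (pos_of_ne_zero hn.ne_zero) h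

theorem sigma_one_mul_totient_of_squarefree {n : ℕ} (hn : Squarefree n) :
    (σ 1 n * φ n : ℝ) = n ^ 2 * ∏ p ∈ n.primeFactors, (1 - ((p : ℝ) ^ 2)⁻¹) := by
  rw [sigma_one_eq_prod_primeFactors_add_one hn, totient_eq_prod_primeFactors_sub_one hn]
  nth_rw 3 [← prod_primeFactors_of_squarefree hn]
  push_cast
  rw [← prod_pow, ← prod_mul_distrib, ← prod_mul_distrib]
  refine prod_congr rfl fun p hp => ?_
  have hp : 1 ≤ p := (prime_of_mem_primeFactors hp).one_le
  have hp0 : (p : ℝ) ≠ 0 := by positivity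
  rw [cast_sub hp]
  field_simp
  ring

theorem sigma_one_div_eq_prod_mul_div_totient {n : ℕ} (hn : Squarefree n) :
    (σ 1 n / n : ℝ) = (∏ p ∈ n.primeFactors, (1 - ((p : ℝ) ^ 2)⁻¹)) * (n / φ n) := by
  have hn0 : (n : ℝ) ≠ 0 := cast_ne_zero.mpr hn.ne_zero
  have hφ0 : (φ n : ℝ) ≠ 0 := cast_ne_zero.mpr (totient_pos.mpr (pos_of_ne_zero hn.ne_zero)).ne'
  have h := sigma_one_mul_totient_of_squarefree hn
  generalize ∏ p ∈ n.primeFactors, (1 - ((p : ℝ) ^ 2)⁻¹) = P at h ⊢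
  field_simp
  linear_combination h

end Nat

noncomputable def invSqMonoidHom : ℕ →* ℝ :=
  invMonoidHom.comp ((powMonoidHom 2).comp (Nat.castRingHom ℝ : ℕ →* ℝ))

theorem invSqMonoidHom_apply (m : ℕ) : invSqMonoidHom m = ((m : ℝ) ^ 2)⁻¹ := rfl

theorem hasSum_invSqMonoidHom : HasSum invSqMonoidHom (Real.pi ^ 2 / 6) := by
  convert hasSum_zeta_two using 1
  ext m
  rw [invSqMonoidHom_apply, one_div]

theorem prod_one_sub_inv_sq_inv_le {s : Finset ℕ} (hs : ∀ p ∈ s, p.Prime) :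
    ∏ p ∈ s, (1 - ((p : ℝ) ^ 2)⁻¹)⁻¹ ≤ Real.pi ^ 2 / 6 := by
  have hEuler := EulerProduct.prod_filter_prime_geometric_eq_tsum_factoredNumbers
    hasSum_invSqMonoidHom.summable s
  rw [filter_true_of_mem hs] at hEuler
  rw [← hasSum_invSqMonoidHom.tsum_eq]
  exact hEuler ▸ Summable.tsum_subtype_le _ _ (fun m => inv_nonneg.mpr (sq_nonneg _))
    hasSum_invSqMonoidHom.summable

theorem eight_div_pi_sq_le_prod_one_sub_inv_sq {s : Finset ℕ} (hs : ∀ p ∈ s, p.Prime)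
    (h2 : 2 ∉ s) : 8 / Real.pi ^ 2 ≤ ∏ p ∈ s, (1 - ((p : ℝ) ^ 2)⁻¹) := by
  have hle := prod_one_sub_inv_sq_inv_le (s := insert 2 s) (by simpa [Nat.prime_two] using hs)
  have hpos : 0 < ∏ p ∈ s, (1 - ((p : ℝ) ^ 2)⁻¹) := prod_pos fun p hp => by
    have : (2 : ℝ) ≤ p := by exact_mod_cast (hs p hp).two_le
    have : ((p : ℝ) ^ 2)⁻¹ < 1 := inv_lt_one_of_one_lt₀ (by nlinarith)
    linarith
  rw [prod_insert h2, prod_inv_distrib] at hle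
  norm_num [← div_eq_mul_inv, div_le_iff₀ hpos] at hle
  rw [div_le_iff₀ (by positivity)]
  linarith

theorem abundancy_gt_of_lehmer (n k : ℕ) (hcomp : 1 < n ∧ ¬ n.Prime) (hk : 3 ≤ k)
    (h : k * Nat.totient n = n - 1) :
    ((ArithmeticFunction.sigma 1 n : ℝ)) / (n : ℝ) > 24 / Real.pi ^ 2 := by
  have hn2 : 2 < n := by
    by_contra! hle
    interval_cases n <;> simp_all
  have hcop := Nat.coprime_totient_of_totient_dvd_sub_one (by omega) (Dvd.intro_left k h)
  have hsq := Nat.squarefree_of_coprime_totient hcop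
  have h2 : 2 ∉ n.primeFactors := fun h2 =>
    (Nat.odd_of_coprime_totient hn2 hcop).not_two_dvd_nat (Nat.dvd_of_mem_primeFactors h2)
  have hP := eight_div_pi_sq_le_prod_one_sub_inv_sq (fun _ => Nat.prime_of_mem_primeFactors) h2
  have h3 : (3 : ℝ) < n / φ n := by
    have hφ : 0 < φ n := Nat.totient_pos.mpr (by omega)
    rw [lt_div_iff₀ (by exact_mod_cast hφ)]
    have := Nat.mul_le_mul_right (φ n) hk
    exact_mod_cast (show 3 * φ n < n by omega)
  rw [Nat.sigma_one_div_eq_prod_mul_div_totient hsq, gt_iff_lt]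
  calc 24 / Real.pi ^ 2 = 8 / Real.pi ^ 2 * 3 := by ring
    _ < _ := mul_lt_mul' hP h3 (by norm_num) (lt_of_lt_of_le (by positivity) hP)
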